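/- For the Černý automaton C_n (n ≥ 2), the reset complexity of Syn(C_n) equals n: no synchronizing DFA with fewer than n states has Syn(C_n) as its language of synchronizing words. -/

import Mathlib

/-- The action of a DFA's transition function `δ` extended to words. -/
def actW {Q A : Type*} (δ : Q → A → Q) (q : Q) (w : List A) : Q := w.foldl δ q

/-- The Černý automaton `C_n` on states `Fin n` over the alphabet `Bool`:
the letter `b` (encoded `true`) acts as the cycle `i ↦ i + 1 (mod n)`, and the
letter `a` (encoded `false`) fixes every state except `n − 1`, which it sends
to `0`. -/
def cerny {n : ℕ} (i : Fin n) (x : Bool) : Fin n :=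
  if x then ⟨(i.val + 1) % n, Nat.mod_lt _ i.pos⟩
  else if i.val = n - 1 then ⟨0, i.pos⟩ else i

open Fin.NatCast Fin.CommRing

theorem actW_append {Q A : Type*} (δ : Q → A → Q) (q : Q) (u v : List A) :
    actW δ q (u ++ v) = actW δ (actW δ q u) v := List.foldl_append ..
def rotW (r : ℕ) : List Bool := List.replicate r true
section basic
variable {n : ℕ} [NeZero n]
theorem cerny_true (i : Fin n) : cerny i true = i + 1 := by
  unfold cerny
  simp only [if_pos]
  apply Fin.ext
  simp only [Fin.add_def, Fin.val_one']
  conv_rhs => rw [Nat.add_mod, Nat.mod_mod, ← Nat.add_mod]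
theorem act_rotW (i : Fin n) (r : ℕ) : actW cerny i (rotW r) = i + (r : Fin n) := by
  induction r generalizing i with
  | zero => simp [rotW, actW]
  | succ r ih =>
    have h : rotW (r+1) = true :: rotW r := rfl
    rw [h]
    show actW cerny (cerny i true) (rotW r) = _
    rw [ih, cerny_true]; push_cast; ring
theorem natCast_sub_one : ((n - 1 : ℕ) : Fin n) = -1 := by
  have h1 : 1 ≤ n := Nat.one_le_iff_ne_zero.mpr (NeZero.ne n)
  push_cast [Nat.cast_sub h1]; simp

-- false acts
theorem cerny_false (i : Fin n) : cerny i false = if i = -1 then 0 else i := by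
  have h1 : 1 ≤ n := Nat.one_le_iff_ne_zero.mpr (NeZero.ne n)
  unfold cerny
  simp only [Bool.false_eq_true, if_false]
  have hv : ((-1 : Fin n)).val = n - 1 := by
    rw [← natCast_sub_one, Fin.val_natCast, Nat.mod_eq_of_lt (by omega)]
  by_cases h : i = -1
  · subst h; rw [if_pos (by rw [hv]), if_pos rfl]; rfl
  · rw [if_neg, if_neg h]
    intro hc
    exact h (Fin.ext (by rw [hv, hc]))

-- the merge word: sends p to 0 = image of p+1, shifts everything else
def mergW (n : ℕ) (p : ℕ) : List Bool := rotW (n - 1 - p) ++ [false]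

theorem act_mergW (p i : Fin n) :
    actW cerny i (mergW n p.val) = if i = p then 0 else i - p - 1 := by
  have h1 : 1 ≤ n := Nat.one_le_iff_ne_zero.mpr (NeZero.ne n)
  have hple : p.val ≤ n - 1 := by have := p.isLt; omega
  rw [mergW, actW_append, act_rotW]
  have hc : ((n - 1 - p.val : ℕ) : Fin n) = -1 - p := by
    rw [Nat.cast_sub (by omega), natCast_sub_one, Fin.cast_val_eq_self]
  rw [hc]
  show actW cerny _ [false] = _
  have : actW cerny (i + (-1 - p)) [false] = cerny (i + (-1 - p)) false := rfl
  rw [this, cerny_false]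
  by_cases h : i = p
  · subst h; rw [if_pos, if_pos rfl]; ring_nf
  · rw [if_neg, if_neg h]
    · ring
    · intro hc2; apply h
      have : i + (-1 - p) + (1 + p) = -1 + (1 + p) := by rw [hc2]
      calc i = i + (-1 - p) + (1 + p) := by ring
        _ = -1 + (1 + p) := this
        _ = p := by ring

-- w0: decrement with floor 0
theorem act_w0 (i : Fin n) : actW cerny i (mergW n 0) = ⟨i.val - 1, lt_of_le_of_lt (Nat.sub_le _ _) i.isLt⟩ := by
  have h := act_mergW (0 : Fin n) i
  simp only [Fin.val_zero] at h
  rw [h]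
  by_cases hi : i = 0
  · subst hi; rw [if_pos rfl]; apply Fin.ext; simp
  · rw [if_neg hi]
    apply Fin.ext
    have hv1 : (1 : ℕ) ≤ i.val := Nat.one_le_iff_ne_zero.mpr (fun hc => hi (Fin.ext hc))
    show (i - 0 - 1).val = i.val - 1
    rw [sub_zero, Fin.sub_def]
    have hval1 : (1 : Fin n).val = 1 % n := Fin.val_one' n
    rw [hval1]
    have hlt := i.isLt
    have h1n : 1 ≤ n := Nat.one_le_iff_ne_zero.mpr (NeZero.ne n)
    rcases Nat.eq_or_lt_of_le h1n with h | h
    · omega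
    · rw [Nat.mod_eq_of_lt h]
      show (n - 1 + i.val) % n = i.val - 1
      have heq : n - 1 + i.val = (i.val - 1) + n := by omega
      rw [heq, Nat.add_mod_right, Nat.mod_eq_of_lt (by omega)]

def iterW (n : ℕ) : ℕ → List Bool
  | 0 => []
  | k+1 => iterW n k ++ mergW n 0

theorem act_iterW (i : Fin n) (k : ℕ) :
    actW cerny i (iterW n k) = ⟨i.val - k, lt_of_le_of_lt (Nat.sub_le _ _) i.isLt⟩ := by
  induction k with
  | zero => apply Fin.ext; simp [iterW, actW]
  | succ k ih =>
    rw [iterW, actW_append, ih, act_w0]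
    apply Fin.ext
    show i.val - k - 1 = i.val - (k+1)
    omega

-- sweep word
def sweepW (n : ℕ) (z k : ℕ) : List Bool := rotW (n - z) ++ iterW n k

theorem act_sweepW (z i : Fin n) (k : ℕ) :
    actW cerny i (sweepW n z.val k) = ⟨(i - z).val - k, lt_of_le_of_lt (Nat.sub_le _ _) (i - z).isLt⟩ := by
  rw [sweepW, actW_append, act_rotW]
  have hc : ((n - z.val : ℕ) : Fin n) = -z := by
    rw [Nat.cast_sub (le_of_lt z.isLt), Fin.natCast_self, Fin.cast_val_eq_self, zero_sub]
  rw [hc]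
  have : i + -z = i - z := by ring
  rw [this, act_iterW]
end basic

section sets
variable {n : ℕ} [NeZero n]

theorem val_neg_one : ((-1 : Fin n)).val = n - 1 := by
  have h1 : 1 ≤ n := Nat.one_le_iff_ne_zero.mpr (NeZero.ne n)
  rw [← natCast_sub_one, Fin.val_natCast, Nat.mod_eq_of_lt (by omega)]

theorem sync_card (T : Finset (Fin n)) (hT : T.Nonempty) (z : Fin n) (k : ℕ)
    (h : ∀ t ∈ T, (t - z).val ≤ k) :
    (T.image (fun q => actW cerny q (sweepW n z.val k))).card = 1 := by
  have him : T.image (fun q => actW cerny q (sweepW n z.val k)) = {0} := by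
    apply Finset.eq_singleton_iff_nonempty_unique_mem.mpr
    constructor
    · exact hT.image _
    · intro a ha
      obtain ⟨t, ht, rfl⟩ := Finset.mem_image.mp ha
      rw [act_sweepW]
      apply Fin.ext
      show (t - z).val - k = (0 : Fin n).val
      simp [Nat.sub_eq_zero_of_le (h t ht)]
  rw [him, Finset.card_singleton]

theorem unsync_card (S : Finset (Fin n)) (hS : 2 ≤ S.card) (z : Fin n) (k : ℕ)
    (x : Fin n) (hx : x ∈ S) (hxz : (x - z).val = n - 1) (hk : k ≤ n - 2) :
    1 < (S.image (fun q => actW cerny q (sweepW n z.val k))).card := by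
  have h2 : 2 ≤ n := le_trans hS (by simpa using Finset.card_le_univ S)
  obtain ⟨s, hs, hsx⟩ := Finset.exists_mem_ne (show 1 < S.card by omega) x
  rw [Finset.one_lt_card_iff]
  refine ⟨actW cerny x (sweepW n z.val k), actW cerny s (sweepW n z.val k),
    Finset.mem_image_of_mem _ hx, Finset.mem_image_of_mem _ hs, ?_⟩
  rw [act_sweepW, act_sweepW]
  intro hc
  have hc' : (x - z).val - k = (s - z).val - k := congrArg Fin.val hc
  have hslt := (s - z).isLt
  have : (s - z).val = n - 1 := by omega
  apply hsx
  have : s - z = x - z := Fin.ext (by rw [this, hxz])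
  exact sub_left_inj.mp this

theorem distinguish (S T : Finset (Fin n)) (hS : 2 ≤ S.card) (hT : 2 ≤ T.card)
    (x : Fin n) (hxS : x ∈ S) (hxT : x ∉ T) :
    ∃ u : List Bool, (T.image (fun q => actW cerny q u)).card = 1 ∧
      (S.image (fun q => actW cerny q u)).card ≠ 1 := by
  have h2 : 2 ≤ n := le_trans hS (by simpa using Finset.card_le_univ S)
  set z := x + 1 with hz
  have hxz : (x - z).val = n - 1 := by
    have : x - z = -1 := by rw [hz]; ring
    rw [this, val_neg_one]
  set k := T.sup (fun t => (t - z).val) with hk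
  have hbound : ∀ t ∈ T, (t - z).val ≤ k := fun t ht => Finset.le_sup (f := fun t => (t - z).val) ht
  have hk2 : k ≤ n - 2 := by
    apply Finset.sup_le
    intro t ht
    have hlt := (t - z).isLt
    rcases Nat.lt_or_ge (t - z).val (n - 1) with h | h
    · omega
    · exfalso
      have hv : (t - z).val = n - 1 := by omega
      have : t - z = x - z := Fin.ext (by rw [hv, hxz])
      exact hxT (sub_left_inj.mp this ▸ ht)
  refine ⟨sweepW n z.val k, sync_card T (Finset.card_pos.mp (by omega)) z k hbound, ?_⟩
  have := unsync_card S hS z k x hxS hxz hk2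
  omega

end sets

theorem image_actW_append {Q A : Type*} [DecidableEq Q] (δ : Q → A → Q) (X : Finset Q)
    (u v : List A) :
    X.image (fun q => actW δ q (u ++ v))
      = (X.image (fun q => actW δ q u)).image (fun q => actW δ q v) := by
  rw [Finset.image_image]
  apply Finset.image_congr
  intro q _
  exact actW_append δ q u v

section reach
variable {n : ℕ} [NeZero n]

theorem exists_boundary (S : Finset (Fin n)) (hne : S.Nonempty)
    (hnuniv : S ≠ Finset.univ) : ∃ v ∈ S, v - 1 ∉ S := by
  by_contra hcon
  push_neg at hcon
  obtain ⟨v₀, hv₀⟩ := hne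
  have hk : ∀ k : ℕ, v₀ - (k : Fin n) ∈ S := by
    intro k
    induction k with
    | zero => simpa using hv₀
    | succ k ih =>
      have : v₀ - ((k+1 : ℕ) : Fin n) = (v₀ - (k : Fin n)) - 1 := by push_cast; ring
      rw [this]
      exact hcon _ ih
  apply hnuniv
  apply Finset.eq_univ_of_forall
  intro x
  have := hk ((v₀ - x).val)
  rwa [Fin.cast_val_eq_self, sub_sub_cancel] at this

theorem act_move (v i : Fin n) :
    actW cerny i (mergW n (v-1).val ++ rotW v.val) = if i = v - 1 then v else i := by
  rw [actW_append, act_mergW, act_rotW]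
  by_cases h : i = v - 1
  · rw [if_pos h, if_pos h, Fin.cast_val_eq_self, zero_add]
  · rw [if_neg h, if_neg h, Fin.cast_val_eq_self]
    ring

theorem reach (S : Finset (Fin n)) (hne : S.Nonempty) :
    ∃ w : List Bool, Finset.univ.image (fun q : Fin n => actW cerny q w) = S := by
  suffices aux : ∀ j (S : Finset (Fin n)), S.Nonempty → n ≤ S.card + j →
      ∃ w : List Bool, Finset.univ.image (fun q : Fin n => actW cerny q w) = S by
    exact aux n S hne (by omega)
  intro j
  induction j with
  | zero =>
    intro S hne hcard
    have hS : S = Finset.univ := by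
      apply Finset.eq_univ_of_card
      have h1 : S.card ≤ n := by simpa using Finset.card_le_univ S
      simp only [Fintype.card_fin]
      omega
    subst hS
    exact ⟨[], by simp [actW]⟩
  | succ j ih =>
    intro S hne hcard
    by_cases hc : n ≤ S.card + j
    · exact ih S hne hc
    · have hcard_lt : S.card < n := by omega
      have hnuniv : S ≠ Finset.univ := by
        intro h
        rw [h, Finset.card_univ, Fintype.card_fin] at hcard_lt
        omega
      obtain ⟨v, hvS, hvS'⟩ := exists_boundary S hne hnuniv
      have hTcard : (insert (v - 1) S).card = S.card + 1 :=
        Finset.card_insert_of_notMem hvS'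
      obtain ⟨w, hw⟩ := ih (insert (v - 1) S) ⟨v - 1, Finset.mem_insert_self _ _⟩
        (by omega)
      refine ⟨w ++ (mergW n (v-1).val ++ rotW v.val), ?_⟩
      rw [image_actW_append, hw, Finset.image_insert]
      have h1 : S.image (fun q => actW cerny q (mergW n (v-1).val ++ rotW v.val)) = S := by
        have : S.image (fun q => actW cerny q (mergW n (v-1).val ++ rotW v.val))
            = S.image id := by
          apply Finset.image_congr
          intro q hq
          show actW cerny q (mergW n (v-1).val ++ rotW v.val) = id q
          rw [act_move]
          rw [if_neg]
          · rfl
          · intro h; rw [h] at hq; exact hvS' hq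
        rw [this, Finset.image_id]
      rw [h1, act_move, if_pos rfl, Finset.insert_eq_self.mpr hvS]
end reach

theorem card_filter_two_le (α : Type*) [Fintype α] [DecidableEq α] :
    ((Finset.univ : Finset (Finset α)).filter (fun S => 2 ≤ S.card)).card
      = 2 ^ Fintype.card α - (Fintype.card α + 1) := by
  classical
  have htot : (Finset.univ : Finset (Finset α)).card = 2 ^ Fintype.card α := by
    rw [Finset.card_univ, Fintype.card_finset]
  have hsplit := Finset.card_filter_add_card_filter_not
    (s := (Finset.univ : Finset (Finset α))) (p := fun S => 2 ≤ S.card)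
  have hneg : (Finset.univ : Finset (Finset α)).filter (fun S => ¬ 2 ≤ S.card)
      = insert ∅ (Finset.univ.image fun a => ({a} : Finset α)) := by
    ext S
    simp only [Finset.mem_filter, Finset.mem_univ, true_and, Finset.mem_insert,
      Finset.mem_image]
    constructor
    · intro h
      have h1 : S.card ≤ 1 := by omega
      rcases Nat.le_one_iff_eq_zero_or_eq_one.mp h1 with h0 | h0
      · exact Or.inl (Finset.card_eq_zero.mp h0)
      · obtain ⟨a, ha⟩ := Finset.card_eq_one.mp h0
        exact Or.inr ⟨a, ha.symm⟩
    · rintro (rfl | ⟨a, rfl⟩) <;> simp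
  have hnegcard : ((Finset.univ : Finset (Finset α)).filter (fun S => ¬ 2 ≤ S.card)).card
      = Fintype.card α + 1 := by
    rw [hneg, Finset.card_insert_of_notMem (by simp), Finset.card_image_of_injective _
      Finset.singleton_injective, Finset.card_univ]
  rw [hnegcard, htot] at hsplit
  have hle : Fintype.card α < 2 ^ Fintype.card α := Nat.lt_two_pow_self
  omega

theorem two_pow_gap : ∀ j, 1 ≤ j → ∀ m, 1 ≤ m → 2^m + j + 1 ≤ 2^(m+j) := by
  intro j
  induction j with
  | zero => omega
  | succ j ih =>
    intro _ m hm
    rcases Nat.eq_zero_or_pos j with rfl | hj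
    · have : 2 ≤ 2^m := Nat.one_lt_two_pow_iff.mpr (by omega)
      rw [pow_succ]
      omega
    · have h1 := ih hj m hm
      have h2 : 1 ≤ 2^(m+j) := Nat.one_le_two_pow
      rw [show m + (j+1) = (m+j) + 1 by omega, pow_succ]
      omega


/-- the reset complexity of `Syn(C_n)` equals `n`: some
synchronizing DFA with `n` states (namely `C_n` itself) has it as language of
synchronizing words, and no synchronizing DFA with fewer than `n` states
does. -/
theorem stmt_14 (n : ℕ) (hn : 2 ≤ n) :
    (∃ δ : Fin n → Bool → Fin n,
        {w : List Bool | (Finset.univ.image (fun q => actW δ q w)).card = 1}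
          = {w : List Bool | (Finset.univ.image (fun q : Fin n => actW cerny q w)).card = 1}) ∧
    (∀ (Q : Type) (_ : Fintype Q) (_ : Nonempty Q) (δ : Q → Bool → Q)
        (_ : DecidableEq Q),
        {w : List Bool | (Finset.univ.image (fun q => actW δ q w)).card = 1}
          = {w : List Bool | (Finset.univ.image (fun q : Fin n => actW cerny q w)).card = 1} →
        n ≤ Fintype.card Q) := by
  haveI : NeZero n := ⟨by omega⟩
  constructor
  · exact ⟨cerny, by rfl⟩
  · intro Q instF instNE δ instD hEq
    classical
    have hiff : ∀ w : List Bool,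
        (Finset.univ.image (fun q => actW δ q w)).card = 1 ↔
        (Finset.univ.image (fun q : Fin n => actW cerny q w)).card = 1 :=
      fun w => Set.ext_iff.mp hEq w
    by_contra hlt
    push_neg at hlt
    set m := Fintype.card Q with hm
    have hm1 : 1 ≤ m := Fintype.card_pos
    -- choose reaching words
    have hws : ∀ S : Finset (Fin n), ∃ w : List Bool,
        2 ≤ S.card → Finset.univ.image (fun q : Fin n => actW cerny q w) = S := by
      intro S
      by_cases h : 2 ≤ S.card
      · obtain ⟨w, hw⟩ := reach S (Finset.card_pos.mp (by omega))
        exact ⟨w, fun _ => hw⟩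
      · exact ⟨[], fun hc => absurd hc h⟩
    choose ws hws' using hws
    set F : Finset (Fin n) → Finset Q :=
      fun S => Finset.univ.image (fun q => actW δ q (ws S)) with hF
    -- key contradiction builder
    have key : ∀ S T : Finset (Fin n), 2 ≤ S.card → 2 ≤ T.card → F S = F T →
        ∀ x : Fin n, x ∈ S → x ∉ T → False := by
      intro S T hS hT hFeq x hxS hxT
      obtain ⟨u, hu1, hu2⟩ := distinguish S T hS hT x hxS hxT
      have e : ∀ (X : Finset (Fin n)), 2 ≤ X.card →
          Finset.univ.image (fun q : Fin n => actW cerny q (ws X ++ u))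
            = X.image (fun q => actW cerny q u) := by
        intro X hX
        rw [image_actW_append, hws' X hX]
      have eS := e S hS
      have eT := e T hT
      have cS : ¬ (Finset.univ.image (fun q : Fin n => actW cerny q (ws S ++ u))).card = 1 := by
        rw [eS]; exact hu2
      have cT : (Finset.univ.image (fun q : Fin n => actW cerny q (ws T ++ u))).card = 1 := by
        rw [eT]; exact hu1
      have bS := (hiff (ws S ++ u)).not.mpr cS
      have bT := (hiff (ws T ++ u)).mpr cT
      apply bS
      rw [image_actW_append]
      show ((F S).image (fun q => actW δ q u)).card = 1
      rw [hFeq]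
      rw [image_actW_append] at bT
      exact bT
    -- the injection on sets of size ≥ 2
    have hmaps : ∀ S ∈ (Finset.univ : Finset (Finset (Fin n))).filter (fun S => 2 ≤ S.card),
        F S ∈ (Finset.univ : Finset (Finset Q)).filter (fun P => 2 ≤ P.card) := by
      intro S hSmem
      have hS : 2 ≤ S.card := (Finset.mem_filter.mp hSmem).2
      refine Finset.mem_filter.mpr ⟨Finset.mem_univ _, ?_⟩
      have hne : (F S).Nonempty := Finset.Nonempty.image Finset.univ_nonempty _
      have hcard1 : 1 ≤ (F S).card := Finset.card_pos.mpr hne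
      have hnot1 : ¬ (F S).card = 1 := by
        intro hc
        have := (hiff (ws S)).mp hc
        rw [hws' S hS] at this
        omega
      omega
    have hinj : Set.InjOn F ((Finset.univ : Finset (Finset (Fin n))).filter
        (fun S => 2 ≤ S.card)) := by
      intro S hSmem T hTmem hFeq
      simp only [Finset.coe_filter, Set.mem_setOf_eq] at hSmem hTmem
      by_contra hne
      by_cases hsub : S ⊆ T
      · obtain ⟨x, hxT, hxS⟩ := Finset.exists_of_ssubset ⟨hsub, fun h => hne
          (Finset.Subset.antisymm hsub h)⟩
        exact key T S hTmem.2 hSmem.2 hFeq.symm x hxT hxS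
      · obtain ⟨x, hxS, hxT⟩ := Finset.not_subset.mp hsub
        exact key S T hSmem.2 hTmem.2 hFeq x hxS hxT
    have hcard := Finset.card_le_card_of_injOn F hmaps hinj
    rw [card_filter_two_le, card_filter_two_le, Fintype.card_fin, ← hm] at hcard
    have h1 : m < 2^m := Nat.lt_two_pow_self
    have h2 : 2^m + (n - m) + 1 ≤ 2^n := by
      have := two_pow_gap (n - m) (by omega) m hm1
      rwa [show m + (n - m) = n by omega] at this
    omega
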